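/- arXiv:math/0507421 — 3 statements merged into one kernel-verified Lean document; each statement's English description precedes it below -/
import Mathlib

section
/- For a depth-2 hierarchy with coarsest attribute A₁ and two children B₁, B₂, and assuming c* is large enough that c(A)/β(A) ≤ c* for all attributes (so that attention may be restricted to complete strategies), the coarse-to-fine strategy minimizes the total expected cost if and only if c(A₁)/β(A₁) ≤ min( c(B₁)/(β(B₁)β(B₂)) + c(B₂)/β(B₂), c(B₁)/β(B₁) + c(B₂)/(β(B₁)β(B₂)) ). -/
open Finset

/-- A tree-structured attribute hierarchy on a finite pattern set `Y`: a finite family of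
nonempty attributes containing `𝒴` itself, any two of which are disjoint or nested, and
in which every singleton is the intersection of the attributes containing it. -/
structure Hierarchy (Y : Type*) [Fintype Y] [DecidableEq Y] where
  attrs : Finset (Finset Y)
  univ_mem : Finset.univ ∈ attrs
  nonempty_of_mem : ∀ A ∈ attrs, A.Nonempty
  nested : ∀ A ∈ attrs, ∀ B ∈ attrs, A ∩ B = ∅ ∨ A ⊆ B ∨ B ⊆ A
  singleton_inf : ∀ y : Y, (attrs.filter fun A => y ∈ A).inf id = {y}

/-- A testing strategy: a finite binary tree whose internal nodes are labeled by tests;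
at each node the test is performed, the right subtree being followed on a positive
outcome and the left subtree on a null outcome. -/
inductive Strategy (ι : Type*) where
  | leaf : Strategy ι
  | node : ι → Strategy ι → Strategy ι → Strategy ι

namespace Strategy

variable {ι : Type*} [DecidableEq ι]

/-- The set of tests performed on outcome `ω` (`ω i = false` means test `i` returned `0`). -/
def performed : Strategy ι → (ι → Bool) → Finset ι
  | leaf, _ => ∅
  | node i t0 t1, ω => insert i (if ω i then performed t1 ω else performed t0 ω)

/-- The zero set: performed tests that returned `0`. -/
def zeroSet : Strategy ι → (ι → Bool) → Finset ι
  | leaf, _ => ∅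
  | node i t0 t1, ω => if ω i then zeroSet t1 ω else insert i (zeroSet t0 ω)

/-- No test occurs twice along a root-to-leaf branch (relative to tests already used). -/
def noRepeatFrom : Strategy ι → Finset ι → Prop
  | leaf, _ => True
  | node i t0 t1, used =>
      i ∉ used ∧ noRepeatFrom t0 (insert i used) ∧ noRepeatFrom t1 (insert i used)

/-- No test occurs twice along any root-to-leaf branch. -/
def noRepeat (T : Strategy ι) : Prop := T.noRepeatFrom ∅

/-- All node labels of the strategy belong to `S`. -/
def labelsIn : Strategy ι → Finset ι → Prop
  | leaf, _ => True
  | node i t0 t1, S => i ∈ S ∧ labelsIn t0 S ∧ labelsIn t1 S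

end Strategy

/-- Probability of the elementary outcome `ω` when the tests are mutually independent
and test `i` returns `0` with probability `pw i` (its power). -/
def pOmega {ι : Type*} [Fintype ι] (pw : ι → ℝ) (ω : ι → Bool) : ℝ :=
  ∏ i, if ω i then 1 - pw i else pw i

/-- Probability of an event (a set of outcomes) under the background product measure. -/
def probOf {ι : Type*} [Fintype ι] [DecidableEq ι] (pw : ι → ℝ)
    (E : Finset (ι → Bool)) : ℝ :=
  ∑ ω ∈ E, pOmega pw ω

/-- Expected testing cost of a strategy: `Σ_i c i · P₀(test i is performed)`. -/
def testCost {ι : Type*} [Fintype ι] [DecidableEq ι] (pw cst : ι → ℝ)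
    (T : Strategy ι) : ℝ :=
  ∑ i, cst i * probOf pw (Finset.univ.filter fun ω => i ∈ T.performed ω)

section Augmented

variable {Y : Type*} [Fintype Y] [DecidableEq Y]

/-- Index set of the augmented hierarchy: the original attributes together with, for
each pattern `y`, an extra copy of `{y}` carrying a perfect test. -/
def AugIdx (H : Hierarchy Y) : Type _ := {A : Finset Y // A ∈ H.attrs} ⊕ Y

instance (H : Hierarchy Y) : Fintype (AugIdx H) :=
  inferInstanceAs (Fintype ({A : Finset Y // A ∈ H.attrs} ⊕ Y))

instance (H : Hierarchy Y) : DecidableEq (AugIdx H) :=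
  inferInstanceAs (DecidableEq ({A : Finset Y // A ∈ H.attrs} ⊕ Y))

/-- The set of patterns covered by an augmented attribute. -/
def augSet (H : Hierarchy Y) : AugIdx H → Finset Y :=
  Sum.elim (fun A => A.val) (fun y => {y})

/-- Powers in the augmented hierarchy: the original power `β A` on original attributes,
and power `1` on the perfect singleton tests. -/
def augPow (H : Hierarchy Y) (β : Finset Y → ℝ) : AugIdx H → ℝ :=
  Sum.elim (fun A => β A.val) (fun _ => 1)

/-- Costs in the augmented hierarchy: the original cost `c A` on original attributes,
and cost `c*` on the perfect singleton tests. -/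
def augCost (H : Hierarchy Y) (c : Finset Y → ℝ) (cstar : ℝ) : AugIdx H → ℝ :=
  Sum.elim (fun A => c A.val) (fun _ => cstar)

/-- A set of augmented attributes is a covering if its members cover all of `𝒴`. -/
def IsCovering (H : Hierarchy Y) (Z : Finset (AugIdx H)) : Prop :=
  Z.sup (augSet H) = Finset.univ

instance (H : Hierarchy Y) (Z : Finset (AugIdx H)) : Decidable (IsCovering H Z) :=
  inferInstanceAs (Decidable (_ = _))

/-- The no-error constraint: almost surely under the background measure, the zero set of
the strategy is a covering. -/
def NoError (H : Hierarchy Y) (β : Finset Y → ℝ) (T : Strategy (AugIdx H)) : Prop :=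
  probOf (augPow H β)
    (Finset.univ.filter fun ω => ¬ IsCovering H (T.zeroSet ω)) = 0

end Augmented

section DepthTwo

variable {Y : Type*} [Fintype Y] [DecidableEq Y]

/-- The three attributes of the depth-2 hierarchy: `0 ↦ A₁ = 𝒴`, `1 ↦ B₁`, `2 ↦ B₂`. -/
def attr3 (B₁ B₂ : Finset Y) : Fin 3 → Finset Y :=
  fun i => if i = 0 then Finset.univ else if i = 1 then B₁ else B₂

/-- Filtered patterns of a strategy on the depth-2 hierarchy on a given outcome. -/
def survivors3 (B₁ B₂ : Finset Y) (T : Strategy (Fin 3)) (ω : Fin 3 → Bool) : Finset Y :=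
  Finset.univ \ (T.zeroSet ω).sup (attr3 B₁ B₂)

/-- Total expected cost: testing cost plus `c*` times the expected number of filtered
patterns. -/
def totalCost3 (B₁ B₂ : Finset Y) (β c : Fin 3 → ℝ) (cstar : ℝ)
    (T : Strategy (Fin 3)) : ℝ :=
  testCost β c T
    + cstar * ∑ ω : Fin 3 → Bool, pOmega β ω * ((survivors3 B₁ B₂ T ω).card : ℝ)

/-- A strategy on the depth-2 hierarchy is coarse-to-fine if on every outcome it
performs the test for `A₁ = 𝒴`, and the tests for `B₁` and `B₂` exactly when `X_{A₁}`
returned a positive answer. -/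
def IsCTF3 (T : Strategy (Fin 3)) : Prop :=
  ∀ ω : Fin 3 → Bool,
    T.performed ω = Finset.univ.filter fun j : Fin 3 => j = 0 ∨ ω 0 = true

end DepthTwo


section CTFToolkit
set_option linter.unusedSectionVars false

open Finset

variable {ι : Type*} [Fintype ι] [DecidableEq ι]

lemma ctf_sum_pOmega_eq_one (pw : ι → ℝ) : ∑ ω : ι → Bool, pOmega pw ω = 1 := by
  have h := Finset.prod_univ_sum (fun _ : ι => (univ : Finset Bool))
    (fun i b => if b then 1 - pw i else pw i)
  simp only [Fintype.piFinset_univ] at h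
  simp only [pOmega] at h ⊢
  have : ∀ i : ι, (∑ j : Bool, if j then 1 - pw i else pw i) = 1 := by
    intro i; rw [Fintype.sum_bool]; ring_nf; simp
  simp only [this, prod_const_one] at h
  rw [← h]

/-- partial product skipping coordinate i -/
def pOmegaSkip (pw : ι → ℝ) (i : ι) (ω : ι → Bool) : ℝ :=
  ∏ j ∈ univ.erase i, if ω j then 1 - pw j else pw j

lemma ctf_pOmega_eq_skip (pw : ι → ℝ) (i : ι) (ω : ι → Bool) :
    pOmega pw ω = (if ω i then 1 - pw i else pw i) * pOmegaSkip pw i ω :=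
  (Finset.mul_prod_erase univ (fun j => if ω j then 1 - pw j else pw j) (mem_univ i)).symm

lemma ctf_pOmegaSkip_update (pw : ι → ℝ) (i : ι) (ω : ι → Bool) (b : Bool) :
    pOmegaSkip pw i (Function.update ω i b) = pOmegaSkip pw i ω := by
  unfold pOmegaSkip
  refine Finset.prod_congr rfl fun j hj => ?_
  rw [Function.update_of_ne (Finset.ne_of_mem_erase hj)]

lemma ctf_sum_filter_true_eq (i : ι) (h : (ι → Bool) → ℝ) :
    ∑ ω ∈ univ.filter (fun ω => ω i = true), h ω
      = ∑ ω ∈ univ.filter (fun ω => ω i = false), h (Function.update ω i true) := by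
  refine Finset.sum_bij' (fun ω _ => Function.update ω i false)
    (fun ω _ => Function.update ω i true) ?_ ?_ ?_ ?_ ?_
  · intro a ha; simp
  · intro a ha; simp
  · intro a ha; simp only [mem_filter, mem_univ, true_and] at ha
    funext j; by_cases hj : j = i
    · subst hj; simp [ha]
    · simp [Function.update_of_ne hj]
  · intro a ha; simp only [mem_filter, mem_univ, true_and] at ha
    funext j; by_cases hj : j = i
    · subst hj; simp [ha]
    · simp [Function.update_of_ne hj]
  · intro a ha; simp only [mem_filter, mem_univ, true_and] at ha
    congr 1
    funext j; by_cases hj : j = i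
    · subst hj; simp [ha]
    · simp [Function.update_of_ne hj]

lemma ctf_indep_split (pw : ι → ℝ) (i : ι) (g : (ι → Bool) → ℝ)
    (hg : ∀ ω b, g (Function.update ω i b) = g ω) :
    (∑ ω ∈ univ.filter (fun ω => ω i = false), pOmega pw ω * g ω
      = pw i * ∑ ω : ι → Bool, pOmega pw ω * g ω) ∧
    (∑ ω ∈ univ.filter (fun ω => ω i = true), pOmega pw ω * g ω
      = (1 - pw i) * ∑ ω : ι → Bool, pOmega pw ω * g ω) := by
  set S := ∑ ω ∈ univ.filter (fun ω => ω i = false), pOmegaSkip pw i ω * g ω with hS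
  have hfalse : ∑ ω ∈ univ.filter (fun ω => ω i = false), pOmega pw ω * g ω = pw i * S := by
    rw [hS, Finset.mul_sum]
    refine Finset.sum_congr rfl fun ω hω => ?_
    simp only [mem_filter, mem_univ, true_and] at hω
    rw [ctf_pOmega_eq_skip pw i, hω]; simp; ring
  have htrue : ∑ ω ∈ univ.filter (fun ω => ω i = true), pOmega pw ω * g ω = (1 - pw i) * S := by
    rw [ctf_sum_filter_true_eq i, hS, Finset.mul_sum]
    refine Finset.sum_congr rfl fun ω hω => ?_
    simp only [mem_filter, mem_univ, true_and] at hω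
    rw [ctf_pOmega_eq_skip pw i, ctf_pOmegaSkip_update, hg]
    simp [mul_assoc]
  have htot : ∑ ω : ι → Bool, pOmega pw ω * g ω = S := by
    rw [← Finset.sum_filter_add_sum_filter_not univ (fun ω => ω i = false)]
    have heq : univ.filter (fun ω : ι → Bool => ¬ ω i = false)
        = univ.filter (fun ω => ω i = true) := by ext ω; simp
    rw [heq, hfalse, htrue]; ring
  rw [htot, hfalse, htrue]; exact ⟨rfl, rfl⟩

lemma ctf_not_mem_performed :
    ∀ (T : Strategy ι) (used : Finset ι), T.noRepeatFrom used →
      ∀ i ∈ used, ∀ ω, i ∉ T.performed ω := by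
  intro T
  induction T with
  | leaf => intro used _ i _ ω; simp [Strategy.performed]
  | node j t0 t1 ih0 ih1 =>
    intro used h i hi ω
    obtain ⟨hj, h0, h1⟩ := h
    have hij : i ≠ j := fun e => hj (e ▸ hi)
    simp only [Strategy.performed, Finset.mem_insert]
    push_neg
    refine ⟨hij, ?_⟩
    by_cases hw : ω j
    · simp only [hw, if_true]
      exact ih1 (insert j used) h1 i (Finset.mem_insert_of_mem hi) ω
    · simp only [hw, if_false]
      exact ih0 (insert j used) h0 i (Finset.mem_insert_of_mem hi) ω

lemma ctf_performed_update :
    ∀ (T : Strategy ι) (used : Finset ι), T.noRepeatFrom used →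
      ∀ i ∈ used, ∀ ω b, T.performed (Function.update ω i b) = T.performed ω := by
  intro T
  induction T with
  | leaf => intro used _ i _ ω b; rfl
  | node j t0 t1 ih0 ih1 =>
    intro used h i hi ω b
    obtain ⟨hj, h0, h1⟩ := h
    have hji : j ≠ i := fun e => hj (e ▸ hi)
    simp only [Strategy.performed, Function.update_of_ne hji]
    cases hw : ω j <;>
      simp [hw, ih0 (insert j used) h0 i (Finset.mem_insert_of_mem hi) ω b,
        ih1 (insert j used) h1 i (Finset.mem_insert_of_mem hi) ω b]

lemma ctf_zeroSet_update :
    ∀ (T : Strategy ι) (used : Finset ι), T.noRepeatFrom used →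
      ∀ i ∈ used, ∀ ω b, T.zeroSet (Function.update ω i b) = T.zeroSet ω := by
  intro T
  induction T with
  | leaf => intro used _ i _ ω b; rfl
  | node j t0 t1 ih0 ih1 =>
    intro used h i hi ω b
    obtain ⟨hj, h0, h1⟩ := h
    have hji : j ≠ i := fun e => hj (e ▸ hi)
    simp only [Strategy.zeroSet, Function.update_of_ne hji]
    cases hw : ω j <;>
      simp [hw, ih0 (insert j used) h0 i (Finset.mem_insert_of_mem hi) ω b,
        ih1 (insert j used) h1 i (Finset.mem_insert_of_mem hi) ω b]

lemma ctf_zeroSet_eq_filter (T : Strategy ι) (ω : ι → Bool) :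
    T.zeroSet ω = (T.performed ω).filter (fun i => ω i = false) := by
  induction T with
  | leaf => simp [Strategy.zeroSet, Strategy.performed]
  | node j t0 t1 ih0 ih1 =>
    simp only [Strategy.zeroSet, Strategy.performed]
    cases hw : ω j <;> simp [hw, Finset.filter_insert, ih0, ih1]

lemma ctf_testCost_eq (pw cst : ι → ℝ) (T : Strategy ι) :
    testCost pw cst T = ∑ ω : ι → Bool, pOmega pw ω * ∑ i ∈ T.performed ω, cst i := by
  unfold testCost probOf
  simp_rw [Finset.mul_sum, Finset.sum_filter]
  rw [Finset.sum_comm]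
  refine Finset.sum_congr rfl fun ω _ => ?_
  have h : univ.filter (fun i => i ∈ T.performed ω) = T.performed ω := by
    ext i; simp
  rw [← Finset.sum_filter, h]
  exact Finset.sum_congr rfl fun i _ => mul_comm _ _


end CTFToolkit

section CTFDepthTwo

open Finset

variable {Y : Type*} [Fintype Y] [DecidableEq Y]

/-- Expected-cost recursion: `R` is the set of patterns not yet eliminated. -/
def ecost (B₁ B₂ : Finset Y) (β c : Fin 3 → ℝ) (cstar : ℝ) :
    Strategy (Fin 3) → Finset Y → ℝ
  | .leaf, R => cstar * R.card
  | .node i t0 t1, R =>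
      c i + β i * ecost B₁ B₂ β c cstar t0 (R \ attr3 B₁ B₂ i)
        + (1 - β i) * ecost B₁ B₂ β c cstar t1 R

lemma ctf_key (B₁ B₂ : Finset Y) (β c : Fin 3 → ℝ) (cstar : ℝ) :
    ∀ (T : Strategy (Fin 3)) (used : Finset (Fin 3)), T.noRepeatFrom used →
      ∀ R : Finset Y,
      ∑ ω : Fin 3 → Bool, pOmega β ω *
          ((∑ j ∈ T.performed ω, c j)
            + cstar * (((R \ (T.zeroSet ω).sup (attr3 B₁ B₂)).card : ℕ) : ℝ))
        = ecost B₁ B₂ β c cstar T R := by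
  intro T
  induction T with
  | leaf =>
    intro used _ R
    simp only [Strategy.performed, Strategy.zeroSet, Finset.sum_empty, zero_add,
      Finset.sup_empty, bot_eq_empty, sdiff_empty, ecost]
    rw [← Finset.sum_mul, ctf_sum_pOmega_eq_one, one_mul]
  | node i t0 t1 ih0 ih1 =>
    intro used h R
    obtain ⟨hi, h0, h1⟩ := h
    set F0 : (Fin 3 → Bool) → ℝ := fun ω =>
      c i + ((∑ j ∈ t0.performed ω, c j)
        + cstar * ((((R \ attr3 B₁ B₂ i) \ (t0.zeroSet ω).sup (attr3 B₁ B₂)).card : ℕ) : ℝ))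
      with hF0
    set F1 : (Fin 3 → Bool) → ℝ := fun ω =>
      c i + ((∑ j ∈ t1.performed ω, c j)
        + cstar * (((R \ (t1.zeroSet ω).sup (attr3 B₁ B₂)).card : ℕ) : ℝ))
      with hF1
    have hmemi : i ∈ insert i used := Finset.mem_insert_self i used
    have hpt : ∀ ω : Fin 3 → Bool, pOmega β ω *
        ((∑ j ∈ (Strategy.node i t0 t1).performed ω, c j)
          + cstar * (((R \ ((Strategy.node i t0 t1).zeroSet ω).sup (attr3 B₁ B₂)).card : ℕ) : ℝ))
        = pOmega β ω * (if ω i then F1 ω else F0 ω) := by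
      intro ω
      cases hw : ω i
      · simp only [Strategy.performed, Strategy.zeroSet, hw, Bool.false_eq_true, if_false, hF0]
        rw [Finset.sum_insert (ctf_not_mem_performed t0 (insert i used) h0 i hmemi ω),
          Finset.sup_insert, ← sdiff_sdiff_left]
        ring_nf
      · simp only [Strategy.performed, Strategy.zeroSet, hw, if_true, hF1]
        rw [Finset.sum_insert (ctf_not_mem_performed t1 (insert i used) h1 i hmemi ω)]
        ring_nf
    rw [Finset.sum_congr rfl fun ω _ => hpt ω]
    rw [← Finset.sum_filter_add_sum_filter_not univ (fun ω : Fin 3 → Bool => ω i = false)]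
    have heq : univ.filter (fun ω : Fin 3 → Bool => ¬ ω i = false)
        = univ.filter (fun ω => ω i = true) := by ext ω; simp
    rw [heq]
    have hcongr0 : ∑ ω ∈ univ.filter (fun ω : Fin 3 → Bool => ω i = false),
        pOmega β ω * (if ω i then F1 ω else F0 ω)
        = ∑ ω ∈ univ.filter (fun ω : Fin 3 → Bool => ω i = false), pOmega β ω * F0 ω := by
      refine Finset.sum_congr rfl fun ω hω => ?_
      simp only [mem_filter, mem_univ, true_and] at hω
      rw [hω]; simp
    have hcongr1 : ∑ ω ∈ univ.filter (fun ω : Fin 3 → Bool => ω i = true),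
        pOmega β ω * (if ω i then F1 ω else F0 ω)
        = ∑ ω ∈ univ.filter (fun ω : Fin 3 → Bool => ω i = true), pOmega β ω * F1 ω := by
      refine Finset.sum_congr rfl fun ω hω => ?_
      simp only [mem_filter, mem_univ, true_and] at hω
      rw [hω]; simp
    have hg0 : ∀ ω b, F0 (Function.update ω i b) = F0 ω := by
      intro ω b
      simp only [hF0, ctf_performed_update t0 (insert i used) h0 i hmemi ω b,
        ctf_zeroSet_update t0 (insert i used) h0 i hmemi ω b]
    have hg1 : ∀ ω b, F1 (Function.update ω i b) = F1 ω := by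
      intro ω b
      simp only [hF1, ctf_performed_update t1 (insert i used) h1 i hmemi ω b,
        ctf_zeroSet_update t1 (insert i used) h1 i hmemi ω b]
    rw [hcongr0, hcongr1, (ctf_indep_split β i F0 hg0).1, (ctf_indep_split β i F1 hg1).2]
    have hci : (c i : ℝ) = ∑ ω : Fin 3 → Bool, pOmega β ω * c i := by
      rw [← Finset.sum_mul, ctf_sum_pOmega_eq_one, one_mul]
    have hsum0 : ∑ ω : Fin 3 → Bool, pOmega β ω * F0 ω
        = c i + ecost B₁ B₂ β c cstar t0 (R \ attr3 B₁ B₂ i) := by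
      rw [← ih0 (insert i used) h0 (R \ attr3 B₁ B₂ i), hci, ← Finset.sum_add_distrib]
      refine Finset.sum_congr rfl fun ω _ => ?_
      simp only [hF0]; ring
    have hsum1 : ∑ ω : Fin 3 → Bool, pOmega β ω * F1 ω
        = c i + ecost B₁ B₂ β c cstar t1 R := by
      rw [← ih1 (insert i used) h1 R, hci, ← Finset.sum_add_distrib]
      refine Finset.sum_congr rfl fun ω _ => ?_
      simp only [hF1]; ring
    rw [hsum0, hsum1]
    show _ = ecost B₁ B₂ β c cstar (Strategy.node i t0 t1) R
    simp only [ecost]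
    ring

lemma ctf_totalCost3_eq_ecost (B₁ B₂ : Finset Y) (β c : Fin 3 → ℝ) (cstar : ℝ)
    (T : Strategy (Fin 3)) (hT : T.noRepeat) :
    totalCost3 B₁ B₂ β c cstar T = ecost B₁ B₂ β c cstar T Finset.univ := by
  rw [totalCost3, ctf_testCost_eq, Finset.mul_sum, ← Finset.sum_add_distrib,
    ← ctf_key B₁ B₂ β c cstar T ∅ hT Finset.univ]
  refine Finset.sum_congr rfl fun ω _ => ?_
  simp only [survivors3]
  ring

end CTFDepthTwo


section CTFMain

open Finset Strategy

variable {Y : Type*} [Fintype Y] [DecidableEq Y]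
variable {B₁ B₂ : Finset Y} {β c : Fin 3 → ℝ} {cstar : ℝ}

/-- Bundled hypotheses for the depth-2 problem. -/
structure CTFH (B₁ B₂ : Finset Y) (β c : Fin 3 → ℝ) (cstar : ℝ) : Prop where
  bpos : ∀ i, 0 < β i
  ble : ∀ i, β i ≤ 1
  cpos : ∀ i, 0 < c i
  spos : 0 < cstar
  large : ∀ i, c i ≤ β i * cstar
  n1 : 1 ≤ B₁.card
  n2 : 1 ≤ B₂.card
  u1 : Finset.univ \ B₁ = B₂
  u2 : Finset.univ \ B₂ = B₁
  cardU : (Finset.univ : Finset Y).card = B₁.card + B₂.card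

lemma ctf_attr0 : attr3 B₁ B₂ 0 = (Finset.univ : Finset Y) := by simp [attr3]
lemma ctf_attr1 : attr3 B₁ B₂ 1 = B₁ := by simp [attr3]
lemma ctf_attr2 : attr3 B₁ B₂ 2 = B₂ := by simp [attr3]

lemma ctf_nonneg (H : CTFH B₁ B₂ β c cstar) :
    ∀ (T : Strategy (Fin 3)) (R : Finset Y), 0 ≤ ecost B₁ B₂ β c cstar T R := by
  intro T
  induction T with
  | leaf =>
    intro R
    exact mul_nonneg H.spos.le (Nat.cast_nonneg _)
  | node i t0 t1 ih0 ih1 =>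
    intro R
    have hb := H.bpos i
    have hb' := H.ble i
    have hc := H.cpos i
    have h0 := ih0 (R \ attr3 B₁ B₂ i)
    have h1 := ih1 R
    simp only [ecost]
    nlinarith [mul_nonneg hb.le h0, mul_nonneg (by linarith : (0:ℝ) ≤ 1 - β i) h1]

lemma ctf_level3 :
    ∀ (T : Strategy (Fin 3)) (used : Finset (Fin 3)), T.noRepeatFrom used →
      0 ∈ used → 1 ∈ used → 2 ∈ used → ∀ R : Finset Y,
      ecost B₁ B₂ β c cstar T R = cstar * R.card := by
  intro T used hnr h0 h1 h2 R
  cases T with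
  | leaf => rfl
  | node i t0 t1 =>
    exfalso
    obtain ⟨hi, -, -⟩ := hnr
    rcases (by omega : i = 0 ∨ i = 1 ∨ i = 2) with rfl | rfl | rfl
    · exact hi h0
    · exact hi h1
    · exact hi h2

/-- After `0` and `1` have been used: bound for any `R ⊇ B₂`. -/
lemma ctf_L2_01 (H : CTFH B₁ B₂ β c cstar) :
    ∀ (T : Strategy (Fin 3)) (used : Finset (Fin 3)), T.noRepeatFrom used →
      0 ∈ used → 1 ∈ used → ∀ R : Finset Y, B₂ ⊆ R →
      c 2 + β 2 * (cstar * ((R \ B₂).card : ℝ)) + (1 - β 2) * (cstar * (R.card : ℝ))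
        ≤ ecost B₁ B₂ β c cstar T R := by
  intro T used hnr h0 h1 R hsub
  have hcard : ((R \ B₂).card : ℝ) = (R.card : ℝ) - (B₂.card : ℝ) := by
    rw [Finset.card_sdiff_of_subset hsub]
    exact_mod_cast Nat.cast_sub (Finset.card_le_card hsub)
  cases T with
  | leaf =>
    show _ ≤ cstar * (R.card : ℝ)
    have hn2 : (1 : ℝ) ≤ (B₂.card : ℝ) := by exact_mod_cast H.n2
    have := H.large 2
    have hb := H.bpos 2
    have hs := H.spos
    rw [hcard]
    nlinarith [H.cpos 2]
  | node i t0 t1 =>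
    obtain ⟨hi, ht0, ht1⟩ := hnr
    rcases (by omega : i = 0 ∨ i = 1 ∨ i = 2) with rfl | rfl | rfl
    · exact absurd h0 hi
    · exact absurd h1 hi
    · simp only [ecost, ctf_attr2]
      rw [ctf_level3 t0 _ ht0 (Finset.mem_insert_of_mem h0) (Finset.mem_insert_of_mem h1)
            (Finset.mem_insert_self _ _) (R \ B₂),
          ctf_level3 t1 _ ht1 (Finset.mem_insert_of_mem h0) (Finset.mem_insert_of_mem h1)
            (Finset.mem_insert_self _ _) R]

/-- After `0` and `2` have been used: bound for any `R ⊇ B₁`. -/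
lemma ctf_L2_02 (H : CTFH B₁ B₂ β c cstar) :
    ∀ (T : Strategy (Fin 3)) (used : Finset (Fin 3)), T.noRepeatFrom used →
      0 ∈ used → 2 ∈ used → ∀ R : Finset Y, B₁ ⊆ R →
      c 1 + β 1 * (cstar * ((R \ B₁).card : ℝ)) + (1 - β 1) * (cstar * (R.card : ℝ))
        ≤ ecost B₁ B₂ β c cstar T R := by
  intro T used hnr h0 h2 R hsub
  have hcard : ((R \ B₁).card : ℝ) = (R.card : ℝ) - (B₁.card : ℝ) := by
    rw [Finset.card_sdiff_of_subset hsub]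
    exact_mod_cast Nat.cast_sub (Finset.card_le_card hsub)
  cases T with
  | leaf =>
    show _ ≤ cstar * (R.card : ℝ)
    have hn1 : (1 : ℝ) ≤ (B₁.card : ℝ) := by exact_mod_cast H.n1
    have := H.large 1
    have hb := H.bpos 1
    have hs := H.spos
    rw [hcard]
    nlinarith [H.cpos 1]
  | node i t0 t1 =>
    obtain ⟨hi, ht0, ht1⟩ := hnr
    rcases (by omega : i = 0 ∨ i = 1 ∨ i = 2) with rfl | rfl | rfl
    · exact absurd h0 hi
    · simp only [ecost, ctf_attr1]
      rw [ctf_level3 t0 _ ht0 (Finset.mem_insert_of_mem h0) (Finset.mem_insert_self _ _)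
            (Finset.mem_insert_of_mem h2) (R \ B₁),
          ctf_level3 t1 _ ht1 (Finset.mem_insert_of_mem h0) (Finset.mem_insert_self _ _)
            (Finset.mem_insert_of_mem h2) R]
    · exact absurd h2 hi

/-- After `1` and `2` have been used: bound for nonempty `R`. -/
lemma ctf_L2_12 (H : CTFH B₁ B₂ β c cstar) :
    ∀ (T : Strategy (Fin 3)) (used : Finset (Fin 3)), T.noRepeatFrom used →
      1 ∈ used → 2 ∈ used → ∀ R : Finset Y, 1 ≤ R.card →
      c 0 + (1 - β 0) * (cstar * (R.card : ℝ))
        ≤ ecost B₁ B₂ β c cstar T R := by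
  intro T used hnr h1 h2 R hR
  have hR' : (1 : ℝ) ≤ (R.card : ℝ) := by exact_mod_cast hR
  cases T with
  | leaf =>
    show _ ≤ cstar * (R.card : ℝ)
    have := H.large 0
    have hb := H.bpos 0
    have hs := H.spos
    nlinarith [H.cpos 0]
  | node i t0 t1 =>
    obtain ⟨hi, ht0, ht1⟩ := hnr
    rcases (by omega : i = 0 ∨ i = 1 ∨ i = 2) with rfl | rfl | rfl
    · simp only [ecost, ctf_attr0]
      rw [show R \ (Finset.univ : Finset Y) = ∅ by simp]
      rw [ctf_level3 t1 _ ht1 (Finset.mem_insert_self _ _) (Finset.mem_insert_of_mem h1)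
            (Finset.mem_insert_of_mem h2) R]
      have hnn := ctf_nonneg H t0 ∅
      have hb := H.bpos 0
      nlinarith [mul_nonneg hb.le hnn]
    · exact absurd h1 hi
    · exact absurd h2 hi

/-- After `0` has been used, on `R = univ`. -/
lemma ctf_L1_0 (H : CTFH B₁ B₂ β c cstar) :
    ∀ (T : Strategy (Fin 3)) (used : Finset (Fin 3)), T.noRepeatFrom used →
      0 ∈ used →
      c 1 + c 2 + (1 - β 1) * (cstar * (B₁.card : ℝ)) + (1 - β 2) * (cstar * (B₂.card : ℝ))
        ≤ ecost B₁ B₂ β c cstar T Finset.univ := by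
  intro T used hnr h0
  have hn1 : (1 : ℝ) ≤ (B₁.card : ℝ) := by exact_mod_cast H.n1
  have hn2 : (1 : ℝ) ≤ (B₂.card : ℝ) := by exact_mod_cast H.n2
  have hcardU : ((Finset.univ : Finset Y).card : ℝ) = (B₁.card : ℝ) + (B₂.card : ℝ) := by
    exact_mod_cast congrArg (Nat.cast : ℕ → ℝ) H.cardU
  cases T with
  | leaf =>
    show _ ≤ cstar * ((Finset.univ : Finset Y).card : ℝ)
    rw [hcardU]
    have hl1 := H.large 1
    have hl2 := H.large 2
    have hb1 := H.bpos 1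
    have hb2 := H.bpos 2
    have hs := H.spos
    nlinarith [H.cpos 1, H.cpos 2, mul_pos hb1 hs, mul_pos hb2 hs]
  | node i t0 t1 =>
    obtain ⟨hi, ht0, ht1⟩ := hnr
    rcases (by omega : i = 0 ∨ i = 1 ∨ i = 2) with rfl | rfl | rfl
    · exact absurd h0 hi
    · -- test 1 next
      simp only [ecost, ctf_attr1, H.u1]
      have hA := ctf_L2_01 H t0 _ ht0 (Finset.mem_insert_of_mem h0)
        (Finset.mem_insert_self _ _) B₂ (le_refl B₂)
      have hB := ctf_L2_01 H t1 _ ht1 (Finset.mem_insert_of_mem h0)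
        (Finset.mem_insert_self _ _) Finset.univ (Finset.subset_univ B₂)
      rw [Finset.sdiff_self] at hA
      rw [H.u2] at hB
      simp only [Finset.card_empty, Nat.cast_zero] at hA
      rw [hcardU] at hB
      have hb1 := H.bpos 1
      have hb1' := H.ble 1
      nlinarith [mul_le_mul_of_nonneg_left hA hb1.le,
        mul_le_mul_of_nonneg_left hB (by linarith : (0:ℝ) ≤ 1 - β 1)]
    · -- test 2 next
      simp only [ecost, ctf_attr2, H.u2]
      have hA := ctf_L2_02 H t0 _ ht0 (Finset.mem_insert_of_mem h0)
        (Finset.mem_insert_self _ _) B₁ (le_refl B₁)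
      have hB := ctf_L2_02 H t1 _ ht1 (Finset.mem_insert_of_mem h0)
        (Finset.mem_insert_self _ _) Finset.univ (Finset.subset_univ B₁)
      rw [Finset.sdiff_self] at hA
      rw [H.u1] at hB
      simp only [Finset.card_empty, Nat.cast_zero] at hA
      rw [hcardU] at hB
      have hb2 := H.bpos 2
      have hb2' := H.ble 2
      nlinarith [mul_le_mul_of_nonneg_left hA hb2.le,
        mul_le_mul_of_nonneg_left hB (by linarith : (0:ℝ) ≤ 1 - β 2)]

/-- the coarse-to-fine value. -/
def ctfVal (β c : Fin 3 → ℝ) (cstar : ℝ) (n1 n2 : ℝ) : ℝ :=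
  c 0 + (1 - β 0) * (c 1 + c 2 + (1 - β 1) * (cstar * n1) + (1 - β 2) * (cstar * n2))

/-- After `1` has been used, on `R = B₂`. -/
lemma ctf_L1_1B2 (H : CTFH B₁ B₂ β c cstar) :
    ∀ (T : Strategy (Fin 3)) (used : Finset (Fin 3)), T.noRepeatFrom used →
      1 ∈ used →
      (1 - β 0) * (1 - β 2) * (cstar * (B₂.card : ℝ))
          + min (c 2 + (1 - β 2) * c 0) (c 0 + (1 - β 0) * c 2)
        ≤ ecost B₁ B₂ β c cstar T B₂ := by
  intro T used hnr h1
  have hn1 : (1 : ℝ) ≤ (B₁.card : ℝ) := by exact_mod_cast H.n1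
  have hn2 : (1 : ℝ) ≤ (B₂.card : ℝ) := by exact_mod_cast H.n2
  have hb0 := H.bpos 0; have hb0' := H.ble 0
  have hb2 := H.bpos 2; have hb2' := H.ble 2
  have hs := H.spos
  have e0 : c 0 ≤ β 0 * (cstar * (B₂.card : ℝ)) := by nlinarith [H.large 0, mul_pos hb0 hs, hn2, hn1]
  have e2 : c 2 ≤ β 2 * (cstar * (B₂.card : ℝ)) := by nlinarith [H.large 2, mul_pos hb2 hs, hn2]
  cases T with
  | leaf =>
    show _ ≤ cstar * ((B₂.card : ℝ))
    refine le_trans (add_le_add_right (min_le_right _ _) _) ?_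
    nlinarith [e0, e2, mul_le_mul_of_nonneg_left e2 (by linarith : (0:ℝ) ≤ 1 - β 0)]
  | node i t0 t1 =>
    obtain ⟨hi, ht0, ht1⟩ := hnr
    rcases (by omega : i = 0 ∨ i = 1 ∨ i = 2) with rfl | rfl | rfl
    · simp only [ecost, ctf_attr0]
      rw [show B₂ \ (Finset.univ : Finset Y) = ∅ by simp]
      have hnn := ctf_nonneg H t0 ∅
      have hA := ctf_L2_01 H t1 _ ht1 (Finset.mem_insert_self _ _)
        (Finset.mem_insert_of_mem h1) B₂ (le_refl B₂)
      rw [Finset.sdiff_self] at hA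
      simp only [Finset.card_empty, Nat.cast_zero] at hA
      have hmin := min_le_right (c 2 + (1 - β 2) * c 0) (c 0 + (1 - β 0) * c 2)
      nlinarith [mul_nonneg hb0.le hnn,
        mul_le_mul_of_nonneg_left hA (by linarith : (0:ℝ) ≤ 1 - β 0)]
    · exact absurd h1 hi
    · simp only [ecost, ctf_attr2]
      rw [Finset.sdiff_self]
      have hnn := ctf_nonneg H t0 ∅
      have hA := ctf_L2_12 H t1 _ ht1 (Finset.mem_insert_of_mem h1)
        (Finset.mem_insert_self _ _) B₂ H.n2
      have hmin := min_le_left (c 2 + (1 - β 2) * c 0) (c 0 + (1 - β 0) * c 2)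
      nlinarith [mul_nonneg hb2.le hnn,
        mul_le_mul_of_nonneg_left hA (by linarith : (0:ℝ) ≤ 1 - β 2)]

/-- After `1` has been used, on `R = univ`. -/
lemma ctf_L1_1univ (H : CTFH B₁ B₂ β c cstar) :
    ∀ (T : Strategy (Fin 3)) (used : Finset (Fin 3)), T.noRepeatFrom used →
      1 ∈ used →
      c 0 + (1 - β 0) * (c 2 + cstar * (B₁.card : ℝ) + (1 - β 2) * (cstar * (B₂.card : ℝ)))
        ≤ ecost B₁ B₂ β c cstar T Finset.univ := by
  intro T used hnr h1
  have hn1 : (1 : ℝ) ≤ (B₁.card : ℝ) := by exact_mod_cast H.n1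
  have hn2 : (1 : ℝ) ≤ (B₂.card : ℝ) := by exact_mod_cast H.n2
  have hcardU : ((Finset.univ : Finset Y).card : ℝ) = (B₁.card : ℝ) + (B₂.card : ℝ) := by
    exact_mod_cast congrArg (Nat.cast : ℕ → ℝ) H.cardU
  have hb0 := H.bpos 0; have hb0' := H.ble 0
  have hb2 := H.bpos 2; have hb2' := H.ble 2
  have hs := H.spos
  have e0 : c 0 ≤ β 0 * (cstar * ((B₁.card : ℝ) + (B₂.card : ℝ))) := by nlinarith [H.large 0, mul_pos hb0 hs, hn2, hn1]
  have e2 : c 2 ≤ β 2 * (cstar * (B₂.card : ℝ)) := by nlinarith [H.large 2, mul_pos hb2 hs, hn2]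
  cases T with
  | leaf =>
    show _ ≤ cstar * ((Finset.univ : Finset Y).card : ℝ)
    rw [hcardU]
    nlinarith [e0, e2, mul_le_mul_of_nonneg_left e2 (by linarith : (0:ℝ) ≤ 1 - β 0)]
  | node i t0 t1 =>
    obtain ⟨hi, ht0, ht1⟩ := hnr
    rcases (by omega : i = 0 ∨ i = 1 ∨ i = 2) with rfl | rfl | rfl
    · simp only [ecost, ctf_attr0]
      rw [show (Finset.univ : Finset Y) \ Finset.univ = ∅ by simp]
      have hnn := ctf_nonneg H t0 ∅
      have hA := ctf_L2_01 H t1 _ ht1 (Finset.mem_insert_self _ _)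
        (Finset.mem_insert_of_mem h1) Finset.univ (Finset.subset_univ B₂)
      rw [H.u2, hcardU] at hA
      nlinarith [mul_nonneg hb0.le hnn,
        mul_le_mul_of_nonneg_left hA (by linarith : (0:ℝ) ≤ 1 - β 0)]
    · exact absurd h1 hi
    · simp only [ecost, ctf_attr2, H.u2]
      have hA := ctf_L2_12 H t0 _ ht0 (Finset.mem_insert_of_mem h1)
        (Finset.mem_insert_self _ _) B₁ H.n1
      have hB := ctf_L2_12 H t1 _ ht1 (Finset.mem_insert_of_mem h1)
        (Finset.mem_insert_self _ _) Finset.univ (by rw [H.cardU]; have := H.n1; omega)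
      rw [hcardU] at hB
      nlinarith [H.cpos 2, mul_le_mul_of_nonneg_left hA hb2.le,
        mul_le_mul_of_nonneg_left hB (by linarith : (0:ℝ) ≤ 1 - β 2)]

/-- After `2` has been used, on `R = B₁`. -/
lemma ctf_L1_2B1 (H : CTFH B₁ B₂ β c cstar) :
    ∀ (T : Strategy (Fin 3)) (used : Finset (Fin 3)), T.noRepeatFrom used →
      2 ∈ used →
      (1 - β 0) * (1 - β 1) * (cstar * (B₁.card : ℝ))
          + min (c 1 + (1 - β 1) * c 0) (c 0 + (1 - β 0) * c 1)
        ≤ ecost B₁ B₂ β c cstar T B₁ := by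
  intro T used hnr h2
  have hn1 : (1 : ℝ) ≤ (B₁.card : ℝ) := by exact_mod_cast H.n1
  have hn2 : (1 : ℝ) ≤ (B₂.card : ℝ) := by exact_mod_cast H.n2
  have hb0 := H.bpos 0; have hb0' := H.ble 0
  have hb1 := H.bpos 1; have hb1' := H.ble 1
  have hs := H.spos
  have e0 : c 0 ≤ β 0 * (cstar * (B₁.card : ℝ)) := by nlinarith [H.large 0, mul_pos hb0 hs, hn2, hn1]
  have e1 : c 1 ≤ β 1 * (cstar * (B₁.card : ℝ)) := by nlinarith [H.large 1, mul_pos hb1 hs, hn1]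
  cases T with
  | leaf =>
    show _ ≤ cstar * ((B₁.card : ℝ))
    refine le_trans (add_le_add_right (min_le_right _ _) _) ?_
    nlinarith [e0, e1, mul_le_mul_of_nonneg_left e1 (by linarith : (0:ℝ) ≤ 1 - β 0)]
  | node i t0 t1 =>
    obtain ⟨hi, ht0, ht1⟩ := hnr
    rcases (by omega : i = 0 ∨ i = 1 ∨ i = 2) with rfl | rfl | rfl
    · simp only [ecost, ctf_attr0]
      rw [show B₁ \ (Finset.univ : Finset Y) = ∅ by simp]
      have hnn := ctf_nonneg H t0 ∅
      have hA := ctf_L2_02 H t1 _ ht1 (Finset.mem_insert_self _ _)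
        (Finset.mem_insert_of_mem h2) B₁ (le_refl B₁)
      rw [Finset.sdiff_self] at hA
      simp only [Finset.card_empty, Nat.cast_zero] at hA
      have hmin := min_le_right (c 1 + (1 - β 1) * c 0) (c 0 + (1 - β 0) * c 1)
      nlinarith [mul_nonneg hb0.le hnn,
        mul_le_mul_of_nonneg_left hA (by linarith : (0:ℝ) ≤ 1 - β 0)]
    · simp only [ecost, ctf_attr1]
      rw [Finset.sdiff_self]
      have hnn := ctf_nonneg H t0 ∅
      have hA := ctf_L2_12 H t1 _ ht1 (Finset.mem_insert_self _ _)
        (Finset.mem_insert_of_mem h2) B₁ H.n1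
      have hmin := min_le_left (c 1 + (1 - β 1) * c 0) (c 0 + (1 - β 0) * c 1)
      nlinarith [mul_nonneg hb1.le hnn,
        mul_le_mul_of_nonneg_left hA (by linarith : (0:ℝ) ≤ 1 - β 1)]
    · exact absurd h2 hi

/-- After `2` has been used, on `R = univ`. -/
lemma ctf_L1_2univ (H : CTFH B₁ B₂ β c cstar) :
    ∀ (T : Strategy (Fin 3)) (used : Finset (Fin 3)), T.noRepeatFrom used →
      2 ∈ used →
      c 0 + (1 - β 0) * (c 1 + cstar * (B₂.card : ℝ) + (1 - β 1) * (cstar * (B₁.card : ℝ)))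
        ≤ ecost B₁ B₂ β c cstar T Finset.univ := by
  intro T used hnr h2
  have hn1 : (1 : ℝ) ≤ (B₁.card : ℝ) := by exact_mod_cast H.n1
  have hn2 : (1 : ℝ) ≤ (B₂.card : ℝ) := by exact_mod_cast H.n2
  have hcardU : ((Finset.univ : Finset Y).card : ℝ) = (B₁.card : ℝ) + (B₂.card : ℝ) := by
    exact_mod_cast congrArg (Nat.cast : ℕ → ℝ) H.cardU
  have hb0 := H.bpos 0; have hb0' := H.ble 0
  have hb1 := H.bpos 1; have hb1' := H.ble 1
  have hs := H.spos
  have e0 : c 0 ≤ β 0 * (cstar * ((B₁.card : ℝ) + (B₂.card : ℝ))) := by nlinarith [H.large 0, mul_pos hb0 hs, hn2, hn1]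
  have e1 : c 1 ≤ β 1 * (cstar * (B₁.card : ℝ)) := by nlinarith [H.large 1, mul_pos hb1 hs, hn1]
  cases T with
  | leaf =>
    show _ ≤ cstar * ((Finset.univ : Finset Y).card : ℝ)
    rw [hcardU]
    nlinarith [e0, e1, mul_le_mul_of_nonneg_left e1 (by linarith : (0:ℝ) ≤ 1 - β 0)]
  | node i t0 t1 =>
    obtain ⟨hi, ht0, ht1⟩ := hnr
    rcases (by omega : i = 0 ∨ i = 1 ∨ i = 2) with rfl | rfl | rfl
    · simp only [ecost, ctf_attr0]
      rw [show (Finset.univ : Finset Y) \ Finset.univ = ∅ by simp]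
      have hnn := ctf_nonneg H t0 ∅
      have hA := ctf_L2_02 H t1 _ ht1 (Finset.mem_insert_self _ _)
        (Finset.mem_insert_of_mem h2) Finset.univ (Finset.subset_univ B₁)
      rw [H.u1, hcardU] at hA
      nlinarith [mul_nonneg hb0.le hnn,
        mul_le_mul_of_nonneg_left hA (by linarith : (0:ℝ) ≤ 1 - β 0)]
    · simp only [ecost, ctf_attr1, H.u1]
      have hA := ctf_L2_12 H t0 _ ht0 (Finset.mem_insert_self _ _)
        (Finset.mem_insert_of_mem h2) B₂ H.n2
      have hB := ctf_L2_12 H t1 _ ht1 (Finset.mem_insert_self _ _)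
        (Finset.mem_insert_of_mem h2) Finset.univ (by rw [H.cardU]; have := H.n1; omega)
      rw [hcardU] at hB
      nlinarith [H.cpos 1, mul_le_mul_of_nonneg_left hA hb1.le,
        mul_le_mul_of_nonneg_left hB (by linarith : (0:ℝ) ≤ 1 - β 1)]
    · exact absurd h2 hi

set_option maxHeartbeats 1000000 in
/-- Optimality of the CTF value under the exact condition. -/
lemma ctf_opt (H : CTFH B₁ B₂ β c cstar)
    (hcond1 : β 1 * β 2 * c 0 ≤ β 0 * c 1 + β 0 * β 1 * c 2)
    (hcond2 : β 1 * β 2 * c 0 ≤ β 0 * c 2 + β 0 * β 2 * c 1) :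
    ∀ T : Strategy (Fin 3), T.noRepeat →
      ctfVal β c cstar (B₁.card : ℝ) (B₂.card : ℝ) ≤ ecost B₁ B₂ β c cstar T Finset.univ := by
  intro T hnr
  have hn1 : (1 : ℝ) ≤ (B₁.card : ℝ) := by exact_mod_cast H.n1
  have hn2 : (1 : ℝ) ≤ (B₂.card : ℝ) := by exact_mod_cast H.n2
  have hcardU : ((Finset.univ : Finset Y).card : ℝ) = (B₁.card : ℝ) + (B₂.card : ℝ) := by
    exact_mod_cast congrArg (Nat.cast : ℕ → ℝ) H.cardU
  have hb0 := H.bpos 0; have hb0' := H.ble 0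
  have hb1 := H.bpos 1; have hb1' := H.ble 1
  have hb2 := H.bpos 2; have hb2' := H.ble 2
  have hs := H.spos
  cases T with
  | leaf =>
    show _ ≤ cstar * ((Finset.univ : Finset Y).card : ℝ)
    rw [hcardU]
    have e0 : c 0 ≤ β 0 * (cstar * ((B₁.card : ℝ) + (B₂.card : ℝ))) := by nlinarith [H.large 0, mul_pos hb0 hs, hn2, hn1]
    have e1 : c 1 ≤ β 1 * (cstar * (B₁.card : ℝ)) := by nlinarith [H.large 1, mul_pos hb1 hs, hn1]
    have e2 : c 2 ≤ β 2 * (cstar * (B₂.card : ℝ)) := by nlinarith [H.large 2, mul_pos hb2 hs, hn2]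
    simp only [ctfVal]
    nlinarith [e0, e1, e2, mul_le_mul_of_nonneg_left e1 (by linarith : (0:ℝ) ≤ 1 - β 0),
      mul_le_mul_of_nonneg_left e2 (by linarith : (0:ℝ) ≤ 1 - β 0)]
  | node i t0 t1 =>
    obtain ⟨hi, ht0, ht1⟩ := hnr
    rcases (by omega : i = 0 ∨ i = 1 ∨ i = 2) with rfl | rfl | rfl
    · simp only [ecost, ctf_attr0]
      rw [show (Finset.univ : Finset Y) \ Finset.univ = ∅ by simp]
      have hnn := ctf_nonneg H t0 ∅
      have hA := ctf_L1_0 H t1 _ ht1 (Finset.mem_insert_self _ _)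
      simp only [ctfVal]
      nlinarith [mul_nonneg hb0.le hnn,
        mul_le_mul_of_nonneg_left hA (by linarith : (0:ℝ) ≤ 1 - β 0)]
    · simp only [ecost, ctf_attr1, H.u1]
      have hA := ctf_L1_1B2 H t0 _ ht0 (Finset.mem_insert_self _ _)
      have hB := ctf_L1_1univ H t1 _ ht1 (Finset.mem_insert_self _ _)
      simp only [ctfVal]
      have sA := mul_le_mul_of_nonneg_left hA hb1.le
      have sB := mul_le_mul_of_nonneg_left hB (by linarith : (0:ℝ) ≤ 1 - β 1)
      rcases min_cases (c 2 + (1 - β 2) * c 0) (c 0 + (1 - β 0) * c 2) with ⟨hm, hmle⟩ | ⟨hm, hmle⟩ <;>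
        rw [hm] at sA
      · linarith [sA, sB, hcond1]
      · nlinarith [sA, sB, mul_pos hb0 (H.cpos 1)]
    · simp only [ecost, ctf_attr2, H.u2]
      have hA := ctf_L1_2B1 H t0 _ ht0 (Finset.mem_insert_self _ _)
      have hB := ctf_L1_2univ H t1 _ ht1 (Finset.mem_insert_self _ _)
      simp only [ctfVal]
      have sA := mul_le_mul_of_nonneg_left hA hb2.le
      have sB := mul_le_mul_of_nonneg_left hB (by linarith : (0:ℝ) ≤ 1 - β 2)
      rcases min_cases (c 1 + (1 - β 1) * c 0) (c 0 + (1 - β 0) * c 1) with ⟨hm, hmle⟩ | ⟨hm, hmle⟩ <;>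
        rw [hm] at sA
      · linarith [sA, sB, hcond2]
      · nlinarith [sA, sB, mul_pos hb0 (H.cpos 2)]

/-- The canonical coarse-to-fine strategy. -/
def ctfT : Strategy (Fin 3) :=
  .node 0 .leaf (.node 1 (.node 2 .leaf .leaf) (.node 2 .leaf .leaf))

/-- Fine-to-coarse competitor #1. -/
def ctfU₁ : Strategy (Fin 3) :=
  .node 1 (.node 2 .leaf (.node 0 .leaf .leaf)) (.node 0 .leaf (.node 2 .leaf .leaf))

/-- Fine-to-coarse competitor #2. -/
def ctfU₂ : Strategy (Fin 3) :=
  .node 2 (.node 1 .leaf (.node 0 .leaf .leaf)) (.node 0 .leaf (.node 1 .leaf .leaf))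

lemma ctfT_noRepeat : ctfT.noRepeat := by
  refine ⟨by decide, trivial, by decide, ⟨by decide, trivial, trivial⟩, by decide, trivial, trivial⟩

lemma ctfU₁_noRepeat : ctfU₁.noRepeat := by
  refine ⟨by decide, ⟨by decide, trivial, by decide, trivial, trivial⟩,
    by decide, trivial, by decide, trivial, trivial⟩

lemma ctfU₂_noRepeat : ctfU₂.noRepeat := by
  refine ⟨by decide, ⟨by decide, trivial, by decide, trivial, trivial⟩,
    by decide, trivial, by decide, trivial, trivial⟩

lemma ctfT_isCTF3 : IsCTF3 ctfT := by
  intro ω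
  cases hw0 : ω 0 <;> cases hw1 : ω 1 <;>
    · ext j
      rcases (by omega : j = 0 ∨ j = 1 ∨ j = 2) with rfl | rfl | rfl <;>
        simp [ctfT, Strategy.performed, hw0, hw1]

lemma ctf_value (H : CTFH B₁ B₂ β c cstar) :
    ecost B₁ B₂ β c cstar ctfT Finset.univ
      = ctfVal β c cstar (B₁.card : ℝ) (B₂.card : ℝ) := by
  have hcardU : ((Finset.univ : Finset Y).card : ℝ) = (B₁.card : ℝ) + (B₂.card : ℝ) := by
    exact_mod_cast congrArg (Nat.cast : ℕ → ℝ) H.cardU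
  simp only [ctfT, ecost, ctf_attr0, ctf_attr1, ctf_attr2]
  rw [H.u1, H.u2]
  simp only [Finset.sdiff_self, Finset.card_empty, Nat.cast_zero, hcardU, ctfVal]
  ring

lemma ctf_cost_congr (B₁ B₂ : Finset Y) (β c : Fin 3 → ℝ) (cstar : ℝ)
    (T T' : Strategy (Fin 3)) (h : ∀ ω, T.performed ω = T'.performed ω) :
    totalCost3 B₁ B₂ β c cstar T = totalCost3 B₁ B₂ β c cstar T' := by
  have hz : ∀ ω, T.zeroSet ω = T'.zeroSet ω := fun ω => by
    rw [ctf_zeroSet_eq_filter, ctf_zeroSet_eq_filter, h]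
  simp only [totalCost3, testCost, survivors3, probOf, h, hz]

lemma ctf_ineq1 (H : CTFH B₁ B₂ β c cstar)
    (h' : ctfVal β c cstar (B₁.card : ℝ) (B₂.card : ℝ)
      ≤ ecost B₁ B₂ β c cstar ctfU₁ Finset.univ) :
    β 1 * β 2 * c 0 ≤ β 0 * c 1 + β 0 * β 1 * c 2 := by
  have hcardU : ((Finset.univ : Finset Y).card : ℝ) = (B₁.card : ℝ) + (B₂.card : ℝ) := by
    exact_mod_cast congrArg (Nat.cast : ℕ → ℝ) H.cardU
  simp only [ctfU₁, ecost, ctf_attr0, ctf_attr1, ctf_attr2] at h'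
  rw [H.u1, H.u2] at h'
  rw [show B₂ \ (Finset.univ : Finset Y) = ∅ by simp] at h'
  simp only [Finset.sdiff_self, Finset.card_empty, Nat.cast_zero, hcardU, ctfVal] at h'
  nlinarith [h']

lemma ctf_ineq2 (H : CTFH B₁ B₂ β c cstar)
    (h' : ctfVal β c cstar (B₁.card : ℝ) (B₂.card : ℝ)
      ≤ ecost B₁ B₂ β c cstar ctfU₂ Finset.univ) :
    β 1 * β 2 * c 0 ≤ β 0 * c 2 + β 0 * β 2 * c 1 := by
  have hcardU : ((Finset.univ : Finset Y).card : ℝ) = (B₁.card : ℝ) + (B₂.card : ℝ) := by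
    exact_mod_cast congrArg (Nat.cast : ℕ → ℝ) H.cardU
  simp only [ctfU₂, ecost, ctf_attr0, ctf_attr1, ctf_attr2] at h'
  rw [H.u1, H.u2] at h'
  rw [show B₁ \ (Finset.univ : Finset Y) = ∅ by simp] at h'
  simp only [Finset.sdiff_self, Finset.card_empty, Nat.cast_zero, hcardU, ctfVal] at h'
  nlinarith [h']

end CTFMain

/-- **Exact CTF-optimality condition for a depth-2 hierarchy.**  Let `𝒴` be partitioned
into nonempty sets `B₁, B₂`, with hierarchy `{A₁ = 𝒴, B₁, B₂}`, tests of costs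
`c i > 0` and powers `β i ∈ (0,1]` (mutually independent under the background measure),
and unit postprocessing cost `c* > 0` large enough that `c i / β i ≤ c*` for all `i`.
Then the coarse-to-fine strategy minimizes the total expected cost if and only if
`c(A₁)/β(A₁) ≤ min( c(B₁)/(β(B₁)β(B₂)) + c(B₂)/β(B₂) ,
 c(B₁)/β(B₁) + c(B₂)/(β(B₁)β(B₂)) )`. -/
theorem depth_two_ctf_optimal_iff {Y : Type*} [Fintype Y] [DecidableEq Y]
    (B₁ B₂ : Finset Y) (h1 : B₁.Nonempty) (h2 : B₂.Nonempty)
    (hdisj : B₁ ∩ B₂ = ∅) (hcover : B₁ ∪ B₂ = Finset.univ)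
    (β c : Fin 3 → ℝ) (hβ : ∀ i, 0 < β i ∧ β i ≤ 1) (hc : ∀ i, 0 < c i)
    (cstar : ℝ) (hcstar : 0 < cstar)
    (hlarge : ∀ i, c i / β i ≤ cstar) :
    (∃ T : Strategy (Fin 3), IsCTF3 T ∧ T.noRepeat ∧
        ∀ T' : Strategy (Fin 3), T'.noRepeat →
          totalCost3 B₁ B₂ β c cstar T ≤ totalCost3 B₁ B₂ β c cstar T')
      ↔ c 0 / β 0
          ≤ min (c 1 / (β 1 * β 2) + c 2 / β 2) (c 1 / β 1 + c 2 / (β 1 * β 2)) := by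
  have hb0 := (hβ 0).1
  have hb1 := (hβ 1).1
  have hb2 := (hβ 2).1
  have hb12 : (0:ℝ) < β 1 * β 2 := mul_pos hb1 hb2
  have H : CTFH B₁ B₂ β c cstar := by
    refine ⟨fun i => (hβ i).1, fun i => (hβ i).2, hc, hcstar,
      fun i => ?_, h1.card_pos, h2.card_pos, ?_, ?_, ?_⟩
    · have := (div_le_iff₀ (hβ i).1).mp (hlarge i); linarith
    · ext y
      simp only [Finset.mem_sdiff, Finset.mem_univ, true_and]
      constructor
      · intro hy
        exact (Finset.mem_union.mp (hcover ▸ Finset.mem_univ y)).resolve_left hy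
      · intro hy hy1
        have : y ∈ B₁ ∩ B₂ := Finset.mem_inter.mpr ⟨hy1, hy⟩
        rw [hdisj] at this
        exact Finset.notMem_empty y this
    · ext y
      simp only [Finset.mem_sdiff, Finset.mem_univ, true_and]
      constructor
      · intro hy
        exact (Finset.mem_union.mp (hcover ▸ Finset.mem_univ y)).resolve_right hy
      · intro hy hy2
        have : y ∈ B₁ ∩ B₂ := Finset.mem_inter.mpr ⟨hy, hy2⟩
        rw [hdisj] at this
        exact Finset.notMem_empty y this
    · rw [← hcover, Finset.card_union_of_disjoint
        (Finset.disjoint_iff_inter_eq_empty.mpr hdisj)]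
  have key1 : c 0 / β 0 ≤ c 1 / (β 1 * β 2) + c 2 / β 2
      ↔ β 1 * β 2 * c 0 ≤ β 0 * c 1 + β 0 * β 1 * c 2 := by
    rw [div_add_div _ _ (ne_of_gt hb12) (ne_of_gt hb2),
      div_le_div_iff₀ hb0 (mul_pos hb12 hb2)]
    constructor <;> intro h <;> nlinarith [h, hb2, hb0, hb1, hb12]
  have key2 : c 0 / β 0 ≤ c 1 / β 1 + c 2 / (β 1 * β 2)
      ↔ β 1 * β 2 * c 0 ≤ β 0 * c 2 + β 0 * β 2 * c 1 := by
    rw [div_add_div _ _ (ne_of_gt hb1) (ne_of_gt hb12),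
      div_le_div_iff₀ hb0 (mul_pos hb1 hb12)]
    constructor <;> intro h <;> nlinarith [h, hb2, hb0, hb1, hb12]
  constructor
  · rintro ⟨T, hctf, hnr, hopt⟩
    rw [le_min_iff, key1, key2]
    have hval : totalCost3 B₁ B₂ β c cstar T
        = ctfVal β c cstar (B₁.card : ℝ) (B₂.card : ℝ) := by
      rw [ctf_cost_congr B₁ B₂ β c cstar T ctfT
          (fun ω => (hctf ω).trans (ctfT_isCTF3 ω).symm),
        ctf_totalCost3_eq_ecost B₁ B₂ β c cstar ctfT ctfT_noRepeat, ctf_value H]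
    constructor
    · have h' := hopt ctfU₁ ctfU₁_noRepeat
      rw [hval, ctf_totalCost3_eq_ecost B₁ B₂ β c cstar ctfU₁ ctfU₁_noRepeat] at h'
      exact ctf_ineq1 H h'
    · have h' := hopt ctfU₂ ctfU₂_noRepeat
      rw [hval, ctf_totalCost3_eq_ecost B₁ B₂ β c cstar ctfU₂ ctfU₂_noRepeat] at h'
      exact ctf_ineq2 H h'
  · intro hcond
    rw [le_min_iff, key1, key2] at hcond
    refine ⟨ctfT, ctfT_isCTF3, ctfT_noRepeat, fun T' hT' => ?_⟩
    rw [ctf_totalCost3_eq_ecost B₁ B₂ β c cstar ctfT ctfT_noRepeat, ctf_value H,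
      ctf_totalCost3_eq_ecost B₁ B₂ β c cstar T' hT']
    exact ctf_opt H hcond.1 hcond.2 T' hT'
end

section
/- Φ₁(x) = x for 0 ≤ x ≤ Ψ'(0), and Φ₁(x) < x for x > Ψ'(0); Φ₁ is concave and nondecreasing on [0,∞); and the sequence defined by U₀ = Ψ(1) and U_{L+1} = Φ₁(U_L) is nonincreasing and converges to Ψ'(0) as L → ∞. -/
open Filter

/-- **Properties of `Φ₁` and the cost recursion for deep hierarchies.**
`Ψ : [0,1] → [0,1]` is convex and strictly increasing with `Ψ 0 = 0`, `Ψ 1 = 1`; `d` is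
its right derivative at `0` (the limit of `Ψ β / β` as `β ↓ 0`);
`Ψ* x = sup_{β ∈ [0,1]} (xβ − Ψ β)` and `Φ₁ x = x − Ψ* x`.  Then `Φ₁ x = x` on `[0, d]`,
`Φ₁ x < x` for `x > d`, `Φ₁` is concave and nondecreasing on `[0, ∞)`, and the sequence
`U 0 = Ψ 1`, `U (L+1) = Φ₁ (U L)` is nonincreasing and converges to `d`. -/
theorem phi_one_properties_and_limit (Ψ : ℝ → ℝ)
    (hconv : ConvexOn ℝ (Set.Icc 0 1) Ψ)
    (hmono : StrictMonoOn Ψ (Set.Icc 0 1))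
    (hΨ0 : Ψ 0 = 0) (hΨ1 : Ψ 1 = 1)
    (d : ℝ)
    (hd : Filter.Tendsto (fun β => Ψ β / β) (nhdsWithin 0 (Set.Ioi 0)) (nhds d))
    (Ψstar : ℝ → ℝ)
    (hΨstar : ∀ x, 0 ≤ x → Ψstar x = sSup ((fun β => x * β - Ψ β) '' Set.Icc 0 1))
    (Φ₁ : ℝ → ℝ) (hΦ₁ : ∀ x, Φ₁ x = x - Ψstar x) :
    (∀ x, 0 ≤ x → x ≤ d → Φ₁ x = x)
    ∧ (∀ x, d < x → Φ₁ x < x)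
    ∧ ConcaveOn ℝ (Set.Ici 0) Φ₁
    ∧ MonotoneOn Φ₁ (Set.Ici 0)
    ∧ ∀ U : ℕ → ℝ, U 0 = Ψ 1 → (∀ L, U (L + 1) = Φ₁ (U L)) →
        Antitone U ∧ Filter.Tendsto U Filter.atTop (nhds d) := by
  have h01 : (0:ℝ) ∈ Set.Icc (0:ℝ) 1 := Set.left_mem_Icc.2 zero_le_one
  have h11 : (1:ℝ) ∈ Set.Icc (0:ℝ) 1 := Set.right_mem_Icc.2 zero_le_one
  -- Ψ is nonnegative on [0,1]
  have hΨnn : ∀ β ∈ Set.Icc (0:ℝ) 1, 0 ≤ Ψ β := by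
    intro β hβ
    rcases eq_or_lt_of_le hβ.1 with h | h
    · rw [← h, hΨ0]
    · have := hmono h01 hβ h
      rw [hΨ0] at this; exact this.le
  -- slope monotonicity
  have hslope : ∀ γ β : ℝ, 0 < γ → γ ≤ β → β ≤ 1 → Ψ γ / γ ≤ Ψ β / β := by
    intro γ β hγ hγβ hβ1
    have hβ : 0 < β := lt_of_lt_of_le hγ hγβ
    have ht0 : 0 ≤ γ / β := by positivity
    have ht1 : γ / β ≤ 1 := div_le_one_of_le₀ hγβ hβ.le
    have key := hconv.2 h01 (Set.mem_Icc.2 ⟨hβ.le, hβ1⟩)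
      (show (0:ℝ) ≤ 1 - γ / β by linarith) ht0 (by ring)
    simp only [smul_eq_mul, mul_zero, zero_add, hΨ0] at key
    rw [div_mul_cancel₀ _ hβ.ne'] at key
    -- key : Ψ γ ≤ (1 - γ/β) * 0 + γ/β * Ψ β
    rw [div_le_div_iff₀ hγ hβ]
    have hkey : Ψ γ ≤ γ / β * Ψ β := by linarith
    calc Ψ γ * β ≤ (γ / β * Ψ β) * β := by nlinarith
      _ = Ψ β * γ := by field_simp
  -- d is below every slope
  have hd_le : ∀ β : ℝ, 0 < β → β ≤ 1 → d ≤ Ψ β / β := by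
    intro β hβ0 hβ1
    refine le_of_tendsto hd ?_
    filter_upwards [self_mem_nhdsWithin,
      mem_nhdsWithin_of_mem_nhds (Ioo_mem_nhds (by linarith : -β < 0) hβ0)] with γ h1 h2
    exact hslope γ β h1 h2.2.le hβ1
  have hd1 : d ≤ 1 := by
    have := hd_le 1 one_pos le_rfl
    rwa [hΨ1, div_one] at this
  have hd0 : 0 ≤ d := by
    refine ge_of_tendsto hd ?_
    filter_upwards [self_mem_nhdsWithin,
      mem_nhdsWithin_of_mem_nhds (Ioo_mem_nhds (by norm_num : (-1:ℝ) < 0) one_pos)] with γ h1 h2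
    exact div_nonneg (hΨnn γ ⟨le_of_lt h1, h2.2.le⟩) (le_of_lt h1)
  -- basic facts about the sup
  have hSbdd : ∀ x : ℝ, 0 ≤ x → BddAbove ((fun β => x * β - Ψ β) '' Set.Icc 0 1) := by
    intro x hx
    refine ⟨x, ?_⟩
    rintro _ ⟨β, hβ, rfl⟩
    have : x * β ≤ x * 1 := mul_le_mul_of_nonneg_left hβ.2 hx
    have := hΨnn β hβ
    simp only []
    linarith
  have hstar_ge : ∀ x : ℝ, 0 ≤ x → ∀ β ∈ Set.Icc (0:ℝ) 1, x * β - Ψ β ≤ Ψstar x := by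
    intro x hx β hβ
    rw [hΨstar x hx]
    exact le_csSup (hSbdd x hx) ⟨β, hβ, rfl⟩
  have hstar_le : ∀ x : ℝ, 0 ≤ x → ∀ c : ℝ, (∀ β ∈ Set.Icc (0:ℝ) 1, x * β - Ψ β ≤ c) →
      Ψstar x ≤ c := by
    intro x hx c hc
    rw [hΨstar x hx]
    refine csSup_le ⟨x * 0 - Ψ 0, ⟨0, h01, rfl⟩⟩ ?_
    rintro _ ⟨β, hβ, rfl⟩
    exact hc β hβ
  have hstar_nonneg : ∀ x : ℝ, 0 ≤ x → 0 ≤ Ψstar x := by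
    intro x hx
    have := hstar_ge x hx 0 h01
    simpa [hΨ0] using this
  -- Part 1 : Φ₁ x = x on [0,d]
  have part1 : ∀ x, 0 ≤ x → x ≤ d → Φ₁ x = x := by
    intro x hx hxd
    have hzero : Ψstar x = 0 := by
      refine le_antisymm (hstar_le x hx 0 ?_) (hstar_nonneg x hx)
      intro β hβ
      rcases eq_or_lt_of_le hβ.1 with h | h
      · simp [← h, hΨ0]
      · have h1 : d ≤ Ψ β / β := hd_le β h hβ.2
        have h2 : x * β ≤ Ψ β := by
          have : x * β ≤ d * β := mul_le_mul_of_nonneg_right hxd h.le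
          have h3 : d * β ≤ (Ψ β / β) * β := mul_le_mul_of_nonneg_right h1 h.le
          rw [div_mul_cancel₀ _ h.ne'] at h3
          linarith
        linarith
    rw [hΦ₁, hzero, sub_zero]
  -- getting a good β₀ below any x > d
  have hexists : ∀ x : ℝ, d < x → ∃ β₀ : ℝ, 0 < β₀ ∧ β₀ ≤ 1 ∧ Ψ β₀ / β₀ < x := by
    intro x hx
    have h1 : ∀ᶠ β in nhdsWithin 0 (Set.Ioi 0), Ψ β / β < x := (tendsto_order.1 hd).2 x hx
    have h2 : ∀ᶠ β in nhdsWithin 0 (Set.Ioi 0), β ∈ Set.Ioi (0:ℝ) := self_mem_nhdsWithin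
    have h3 : ∀ᶠ β in nhdsWithin 0 (Set.Ioi 0), β ∈ Set.Ioo (-1:ℝ) 1 :=
      mem_nhdsWithin_of_mem_nhds (Ioo_mem_nhds (by norm_num) one_pos)
    obtain ⟨β₀, hb1, hb2, hb3⟩ := (h1.and (h2.and h3)).exists
    exact ⟨β₀, hb2, hb3.2.le, hb1⟩
  -- Part 2 : Φ₁ x < x for x > d
  have part2 : ∀ x, d < x → Φ₁ x < x := by
    intro x hx
    have hx0 : 0 ≤ x := le_of_lt (lt_of_le_of_lt hd0 hx)
    obtain ⟨β₀, hb0, hb1, hbx⟩ := hexists x hx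
    have h1 : x * β₀ - Ψ β₀ ≤ Ψstar x := hstar_ge x hx0 β₀ ⟨hb0.le, hb1⟩
    have h2 : 0 < x * β₀ - Ψ β₀ := by
      have : Ψ β₀ / β₀ * β₀ < x * β₀ := mul_lt_mul_of_pos_right hbx hb0
      rw [div_mul_cancel₀ _ hb0.ne'] at this
      linarith
    rw [hΦ₁]
    linarith
  -- Part 3 : concavity
  have part3 : ConcaveOn ℝ (Set.Ici 0) Φ₁ := by
    refine ⟨convex_Ici 0, ?_⟩
    intro x hx y hy a b ha hb hab
    simp only [smul_eq_mul]
    have hx0 : (0:ℝ) ≤ x := hx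
    have hy0 : (0:ℝ) ≤ y := hy
    have hz0 : 0 ≤ a * x + b * y := by positivity
    have hsub : Ψstar (a * x + b * y) ≤ a * Ψstar x + b * Ψstar y := by
      refine hstar_le _ hz0 _ ?_
      intro β hβ
      have h1 : x * β - Ψ β ≤ Ψstar x := hstar_ge x hx0 β hβ
      have h2 : y * β - Ψ β ≤ Ψstar y := hstar_ge y hy0 β hβ
      have h3 : a * (x * β - Ψ β) ≤ a * Ψstar x := mul_le_mul_of_nonneg_left h1 ha
      have h4 : b * (y * β - Ψ β) ≤ b * Ψstar y := mul_le_mul_of_nonneg_left h2 hb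
      have key : (a * x + b * y) * β - Ψ β = a * (x * β - Ψ β) + b * (y * β - Ψ β) := by
        linear_combination Ψ β * hab
      rw [key]; linarith
    rw [hΦ₁, hΦ₁, hΦ₁]
    nlinarith [hsub]
  -- Part 4 : monotone
  have part4 : MonotoneOn Φ₁ (Set.Ici 0) := by
    intro x hx y hy hxy
    have hx0 : (0:ℝ) ≤ x := hx
    have hy0 : (0:ℝ) ≤ y := hy
    have hsub : Ψstar y ≤ Ψstar x + (y - x) := by
      refine hstar_le y hy0 _ ?_
      intro β hβ
      have h1 : x * β - Ψ β ≤ Ψstar x := hstar_ge x hx0 β hβ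
      have h2 : (y - x) * β ≤ (y - x) * 1 := mul_le_mul_of_nonneg_left hβ.2 (by linarith)
      nlinarith
    rw [hΦ₁, hΦ₁]
    linarith
  refine ⟨part1, part2, part3, part4, ?_⟩
  -- Part 5 : the recursion
  intro U hU0 hUrec
  have hΦle : ∀ x : ℝ, 0 ≤ x → Φ₁ x ≤ x := by
    intro x hx
    rw [hΦ₁]
    have := hstar_nonneg x hx
    linarith
  have hΦd : Φ₁ d = d := part1 d hd0 le_rfl
  -- all terms are ≥ d
  have hUd : ∀ L, d ≤ U L := by
    intro L
    induction L with
    | zero => rw [hU0, hΨ1]; exact hd1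
    | succ n ih =>
      rw [hUrec n, ← hΦd]
      exact part4 (Set.mem_Ici.2 hd0) (Set.mem_Ici.2 (le_trans hd0 ih)) ih
  have hstep : ∀ L, U (L + 1) ≤ U L := by
    intro L
    rw [hUrec L]
    exact hΦle (U L) (le_trans hd0 (hUd L))
  have hanti : Antitone U := antitone_nat_of_succ_le hstep
  refine ⟨hanti, ?_⟩
  have hbdd : BddBelow (Set.range U) := ⟨d, by rintro _ ⟨L, rfl⟩; exact hUd L⟩
  have hlim : Filter.Tendsto U Filter.atTop (nhds (⨅ L, U L)) :=
    tendsto_atTop_ciInf hanti hbdd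
  have hℓd : (⨅ L, U L) = d := by
    set ℓ := ⨅ L, U L with hℓ
    have hℓge : d ≤ ℓ := le_ciInf hUd
    rcases eq_or_lt_of_le hℓge with h | h
    · exact h.symm
    · exfalso
      -- ℓ > d : get a uniform decrement
      obtain ⟨β₀, hb0, hb1, hbℓ⟩ := hexists ℓ h
      set δ := ℓ * β₀ - Ψ β₀ with hδ
      have hδpos : 0 < δ := by
        have : Ψ β₀ / β₀ * β₀ < ℓ * β₀ := mul_lt_mul_of_pos_right hbℓ hb0
        rw [div_mul_cancel₀ _ hb0.ne'] at this
        rw [hδ]; linarith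
      have hUℓ : ∀ L, ℓ ≤ U L := fun L => ciInf_le hbdd L
      have hdec : ∀ L, U (L + 1) ≤ U L - δ := by
        intro L
        have hU0' : 0 ≤ U L := le_trans hd0 (hUd L)
        have h1 : U L * β₀ - Ψ β₀ ≤ Ψstar (U L) := hstar_ge (U L) hU0' β₀ ⟨hb0.le, hb1⟩
        have h2 : ℓ * β₀ ≤ U L * β₀ := mul_le_mul_of_nonneg_right (hUℓ L) hb0.le
        rw [hUrec L, hΦ₁]
        rw [hδ]
        linarith
      have hlin : ∀ L : ℕ, U L ≤ U 0 - L * δ := by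
        intro L
        induction L with
        | zero => simp
        | succ n ih =>
          have := hdec n
          push_cast
          push_cast at ih
          linarith
      obtain ⟨N, hN⟩ := exists_nat_gt ((U 0 - d) / δ)
      have hN' : U 0 - d < N * δ := by
        rw [div_lt_iff₀ hδpos] at hN
        linarith
      have := hlin N
      have := hUd N
      linarith
  rwa [hℓd] at hlim
end

section
/- The switching property holds for the harmonic power function: for all y ≥ x ≥ 0 and all a ≥ b > 0, with Φ_a(x) = ax/(x + a), one has Φ_a(x + Φ_b(y − x)) ≤ Φ_a(x) + Φ_b(Φ_a(y) − Φ_a(x)). -/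
/-- **The switching property holds for the harmonic power function (Theorem 6).**
For the harmonic power function `Ψ x = 2 − 2√(1−x) − x`, whose Legendre transform over
`[0,1]` is `Ψ* x = x − x/(x+1)`, the associated map is `Φ_a x = x − a Ψ* (x/a)
= a x / (x + a)`.  For all `y ≥ x ≥ 0` and all `a ≥ b > 0`,
`Φ_a (x + Φ_b (y − x)) ≤ Φ_a x + Φ_b (Φ_a y − Φ_a x)`. -/
theorem harmonic_switching_property (Φ : ℝ → ℝ → ℝ)
    (hΦ : ∀ a x, Φ a x = a * x / (x + a))
    (x y a b : ℝ) (hx : 0 ≤ x) (hxy : x ≤ y) (hb : 0 < b) (hba : b ≤ a) :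
    Φ a (x + Φ b (y - x)) ≤ Φ a x + Φ b (Φ a y - Φ a x) := by
  have ha : 0 < a := lt_of_lt_of_le hb hba
  obtain ⟨t, ht, rfl⟩ : ∃ t, 0 ≤ t ∧ y = x + t := ⟨y - x, by linarith, by ring⟩
  simp only [hΦ, add_sub_cancel_left]
  have h1 : 0 < t + b := by linarith
  have h2 : 0 < x + a := by linarith
  have h3 : 0 < x + t + a := by linarith
  have hu : 0 ≤ b * t / (t + b) := by positivity
  have h4 : 0 < x + b * t / (t + b) + a := by linarith
  have hs : a * (x + t) / (x + t + a) - a * x / (x + a) = a^2 * t / ((x + a) * (x + t + a)) := by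
    field_simp; ring
  rw [hs]
  rw [div_add_div _ _ (ne_of_gt h2) (by positivity : (a:ℝ)^2*t/((x+a)*(x+t+a)) + b ≠ 0)]
  rw [div_le_div_iff₀ h4 (by positivity)]
  field_simp
  have key : (0:ℝ) ≤ a^2*b*t^2*(x*(x+2*a))*((t+b)*(x+a)*(x+t+a)) := by
    have : (0:ℝ) ≤ x*(x+2*a) := mul_nonneg hx (by linarith)
    positivity
  nlinarith [key, mul_nonneg (mul_nonneg (mul_nonneg ha.le hb.le) (sq_nonneg t)) (mul_nonneg hx (by linarith : (0:ℝ) ≤ x + 2*a))]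
end
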